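/- Let q ∈ (1,∞)∖{2}, C > 0 and M > 0. For every ε > 0 there exists Δt₀ > 0, depending only on q, C, M and ε, with the following property: for every mesh size h > 0, integer M_x ≥ 1, nonnegative symmetric summable weights (w_j)_{j≠0} such that C satisfies the discrete Poincaré–Sobolev inequality for exponent q, every initial data u⁰ supported in {|i| ≤ M_x} with u⁰ not identically zero and ‖u⁰‖_{ℓ^q_h} ≤ M, every time step Δt ∈ (0, Δt₀), and every n ∈ ℕ, the solution (uⁿ) of the fully discrete implicit scheme (FD) satisfies ‖uⁿ‖_{ℓ^q_h} ≤ (‖u⁰‖_{ℓ^q_h}^{−(2−q)} + ((2−q)/(q−1)) C^{−2} n Δt)_+^{−1/(2−q)} + ε, where a_+ := max(a,0) and, when q > 2 (so that −1/(2−q) = 1/(q−2) > 0), the expression a_+^{−1/(2−q)} is interpreted as (a_+)^{1/(q−2)}, equal to 0 when a ≤ 0. -/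

import Mathlib

open scoped BigOperators ENNReal

noncomputable def opow (x r : ℝ) : ℝ := |x| ^ (r - 1) * x

noncomputable def discLap (w u : ℤ → ℝ) (i : ℤ) : ℝ :=
  ∑' j : ℤ, if j = 0 then 0 else w j * (u i - u (i - j))

noncomputable def lqNorm (h q : ℝ) (u : ℤ → ℝ) : ℝ :=
  (∑' i : ℤ, h * |u i| ^ q) ^ (1 / q)

noncomputable def energyNorm (h : ℝ) (w u : ℤ → ℝ) : ℝ :=
  Real.sqrt ((1 / 2) * ∑' i : ℤ, ∑' j : ℤ, if j = 0 then 0 else h * w j * (u i - u (i - j)) ^ 2)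

/-- The fully discrete implicit scheme (FD). -/
def IsFD (q Δt : ℝ) (w : ℤ → ℝ) (Mx : ℤ) (u0 : ℤ → ℝ) (u : ℕ → ℤ → ℝ) : Prop :=
  u 0 = u0 ∧
  (∀ n : ℕ, ∀ i : ℤ, Mx < |i| → u n i = 0) ∧
  (∀ n : ℕ, ∀ i : ℤ, |i| ≤ Mx →
    (opow (u (n + 1) i) (q - 1) - opow (u n i) (q - 1)) / Δt + discLap w (u (n + 1)) i = 0)

/-- A solution of the semi-discrete scheme (SD) with initial data `u0`. -/
def IsSD (q : ℝ) (w : ℤ → ℝ) (Mx : ℤ) (u0 : ℤ → ℝ) (v : ℤ → ℝ → ℝ) : Prop :=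
  (∀ i : ℤ, ContinuousOn (v i) (Set.Ici 0)) ∧
  (∀ i : ℤ, Mx < |i| → ∀ t : ℝ, 0 ≤ t → v i t = 0) ∧
  (∀ i : ℤ, v i 0 = u0 i) ∧
  (∀ i : ℤ, |i| ≤ Mx → ∀ t : ℝ, 0 ≤ t →
    opow (v i t) (q - 1) = opow (u0 i) (q - 1) - ∫ s in (0:ℝ)..t, discLap w (fun k => v k s) i)

/-- `C` satisfies the discrete Poincaré–Sobolev inequality for exponent `q`. -/
def PSConst (h q C : ℝ) (w : ℤ → ℝ) (Mx : ℤ) : Prop :=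
  ∀ f : ℤ → ℝ, (∀ i : ℤ, Mx < |i| → f i = 0) → lqNorm h q f ≤ C * energyNorm h w f

/-!
Testing the scheme against `uⁿ⁺¹`, convexity of `|·|^q` (Young's inequality) and the
summation by parts `∑ h v (-Δ_h v) = ‖v‖_X²` turn the Poincaré–Sobolev inequality into
the recurrence `x_{n+1}^q + λ Δt x_{n+1}^2 ≤ x_n^q` for `x_n = ‖uⁿ‖_{ℓ^q_h}`, with
`λ = q/((q-1)C²)`. This is an implicit Euler step of `(x^q)' = -λ x²`, along which
`z = x^(q-2)` is affine with slope `(2-q)λ/q`. Bernoulli's inequality for the exponent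
`2/q` shows that `z_n` moves with this slope up to a factor `1 - O(Δt)`, uniformly because
`x_n ≤ M` (for `q < 2`) or `x_n > ε` (for `q > 2`; otherwise the bound is trivial).
For `q < 2` the factor is absorbed multiplicatively, for `q > 2` by uniform continuity of
`t ↦ t^(1/(q-2))` on a compact interval.
-/

open Finset Filter Topology

section SummationByParts

variable {w v f : ℤ → ℝ} {S : Finset ℤ}

theorem hasSum_mul_comp_sub (hf : ∀ k ∉ S, f k = 0) (i : ℤ) :
    HasSum (fun j => w j * f (i - j)) (∑ k ∈ S, w (i - k) * f k) := by
  refine (Equiv.subLeft i).hasSum_iff.mp ?_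
  have : HasSum (fun k => w (i - k) * f k) (∑ k ∈ S, w (i - k) * f k) :=
    hasSum_sum_of_ne_finset_zero fun k hk => by simp [hf k hk]
  simpa [Function.comp_def] using this

theorem hasSum_comp_sub (hws : Summable w) (k : ℤ) :
    HasSum (fun i => w (i - k)) (∑' j, w j) := by
  refine (Equiv.addRight k).hasSum_iff.mp ?_
  simpa [Function.comp_def] using hws.hasSum

theorem discLap_eq_tsum (i : ℤ) : discLap w v i = ∑' j, w j * (v i - v (i - j)) :=
  tsum_congr fun j => by split_ifs with hj <;> simp [hj]

theorem hasSum_discLap (hws : Summable w) (hv : ∀ k ∉ S, v k = 0) (i : ℤ) :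
    HasSum (fun j => w j * (v i - v (i - j)))
      (v i * ∑' j, w j - ∑ k ∈ S, w (i - k) * v k) :=
  ((hws.hasSum.mul_left (v i)).sub (hasSum_mul_comp_sub hv i)).congr_fun fun j => by ring

theorem hasSum_sq_sub (hws : Summable w) (hv : ∀ k ∉ S, v k = 0) (i : ℤ) :
    HasSum (fun j => w j * (v i - v (i - j)) ^ 2)
      (v i ^ 2 * ∑' j, w j - 2 * v i * ∑ k ∈ S, w (i - k) * v k
        + ∑ k ∈ S, w (i - k) * v k ^ 2) := by
  have hv2 : ∀ k ∉ S, v k ^ 2 = 0 := fun k hk => by simp [hv k hk]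
  exact (((hws.hasSum.mul_left (v i ^ 2)).sub
    ((hasSum_mul_comp_sub hv i).mul_left (2 * v i))).add
      (hasSum_mul_comp_sub hv2 i)).congr_fun fun j => by ring

theorem energyNorm_sq (hh : 0 ≤ h) (hw : ∀ j, 0 ≤ w j) (hws : Summable w)
    (hv : ∀ k ∉ S, v k = 0) :
    energyNorm h w v ^ 2 = ∑ i ∈ S, h * v i * discLap w v i := by
  set W := ∑' j, w j
  have hinner : ∀ i, (∑' j, if j = 0 then 0 else h * w j * (v i - v (i - j)) ^ 2)
      = h * (v i ^ 2 * W - 2 * v i * ∑ k ∈ S, w (i - k) * v k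
        + ∑ k ∈ S, w (i - k) * v k ^ 2) := fun i => by
    rw [← (hasSum_sq_sub hws hv i).tsum_eq, ← tsum_mul_left]
    refine tsum_congr fun j => ?_
    split_ifs with hj
    · simp [hj]
    · ring
  have houter : HasSum (fun i => v i ^ 2 * W - 2 * v i * ∑ k ∈ S, w (i - k) * v k
        + ∑ k ∈ S, w (i - k) * v k ^ 2)
      (∑ i ∈ S, (v i ^ 2 * W - 2 * v i * ∑ k ∈ S, w (i - k) * v k)
        + ∑ k ∈ S, W * v k ^ 2) :=
    (hasSum_sum_of_ne_finset_zero fun i hi => by simp [hv i hi]).add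
      (hasSum_sum fun k _ => (hasSum_comp_sub hws k).mul_right _)
  have hsum : 0 ≤ ∑' i, ∑' j, if j = 0 then 0 else h * w j * (v i - v (i - j)) ^ 2 :=
    tsum_nonneg fun i => tsum_nonneg fun j => by
      split_ifs
      exacts [le_rfl, by have := hw j; positivity]
  rw [energyNorm, Real.sq_sqrt (by positivity), tsum_congr hinner, tsum_mul_left,
    houter.tsum_eq]
  simp only [discLap_eq_tsum, (hasSum_discLap hws hv _).tsum_eq, mul_sum, ← sum_add_distrib]
  refine sum_congr rfl fun i _ => ?_
  rw [← mul_sum]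
  ring

end SummationByParts

theorem opow_mul_self {q : ℝ} (hq : q ≠ 0) (a : ℝ) : opow a (q - 1) * a = |a| ^ q := by
  rcases eq_or_ne a 0 with rfl | ha
  · simp [opow, Real.zero_rpow hq]
  · have ha' : |a| ≠ 0 := abs_ne_zero.mpr ha
    calc opow a (q - 1) * a = |a| ^ (q - 1 - 1) * (|a| * |a|) := by
          rw [opow, abs_mul_abs_self]; ring
      _ = |a| ^ q := by
          rw [← mul_assoc, ← Real.rpow_add_one ha', ← Real.rpow_add_one ha']; ring_nf

theorem abs_opow {q : ℝ} (hq : q ≠ 1) (b : ℝ) : |opow b (q - 1)| = |b| ^ (q - 1) := by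
  rcases eq_or_ne b 0 with rfl | hb
  · simp [opow, Real.zero_rpow (sub_ne_zero.mpr hq)]
  · rw [opow, abs_mul, abs_of_nonneg (by positivity), ← Real.rpow_add_one (abs_ne_zero.mpr hb)]
    ring_nf

theorem mul_sub_le_opow_sub_mul {q : ℝ} (hq : 1 < q) (a b : ℝ) :
    (1 - 1 / q) * (|a| ^ q - |b| ^ q) ≤ (opow a (q - 1) - opow b (q - 1)) * a := by
  have hconj : (q / (q - 1)).HolderConjugate q := by
    rw [Real.holderConjugate_iff]
    constructor
    · rw [lt_div_iff₀ (by linarith)]; linarith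
    · field_simp; ring
  have hyoung := Real.young_inequality_of_nonneg (by positivity : 0 ≤ |b| ^ (q - 1))
    (abs_nonneg a) hconj
  rw [← Real.rpow_mul (abs_nonneg b), mul_div_cancel₀ _ (by linarith : q - 1 ≠ 0),
    show |b| ^ q / (q / (q - 1)) = (1 - 1 / q) * |b| ^ q by field_simp] at hyoung
  have hba : opow b (q - 1) * a ≤ |b| ^ (q - 1) * |a| := by
    simpa [abs_mul, abs_opow hq.ne'] using le_abs_self (opow b (q - 1) * a)
  rw [sub_mul (opow a (q - 1)), opow_mul_self (by positivity)]
  linarith [show (1 - 1 / q) * (|a| ^ q - |b| ^ q) = |a| ^ q - (1 - 1 / q) * |b| ^ q - |a| ^ q / q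
    by ring]

section Norm

variable {h q : ℝ} {v : ℤ → ℝ} {S : Finset ℤ}

theorem lqNorm_nonneg (hh : 0 ≤ h) : 0 ≤ lqNorm h q v :=
  Real.rpow_nonneg (tsum_nonneg fun i => by positivity) _

theorem lqNorm_rpow (hh : 0 ≤ h) (hq : q ≠ 0) (hv : ∀ i ∉ S, v i = 0) :
    lqNorm h q v ^ q = ∑ i ∈ S, h * |v i| ^ q := by
  rw [lqNorm, tsum_eq_sum fun i hi => by simp [hv i hi, Real.zero_rpow hq],
    ← Real.rpow_mul (sum_nonneg fun i _ => by positivity), one_div_mul_cancel hq, Real.rpow_one]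

end Norm

theorem lqNorm_succ_rpow_add_le {q C h Δt : ℝ} {Mx : ℤ} {w u0 : ℤ → ℝ} {u : ℕ → ℤ → ℝ}
    (hq : 1 < q) (hC : C ≠ 0) (hh : 0 < h) (hΔt : 0 < Δt) (hw : ∀ j, 0 ≤ w j)
    (hws : Summable w) (hPS : PSConst h q C w Mx) (hFD : IsFD q Δt w Mx u0 u) (n : ℕ) :
    lqNorm h q (u (n + 1)) ^ q + q / ((q - 1) * C ^ 2) * Δt * lqNorm h q (u (n + 1)) ^ 2
      ≤ lqNorm h q (u n) ^ q := by
  set S := Finset.Icc (-Mx) Mx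
  have hS : ∀ i, i ∈ S ↔ |i| ≤ Mx := fun i => by simp [S, abs_le]
  have hsupp : ∀ k, ∀ i ∉ S, u k i = 0 := fun k i hi =>
    hFD.2.1 k i (not_le.mp fun h' => hi ((hS i).mpr h'))
  set a := u (n + 1)
  set E := energyNorm h w a
  have hscheme : ∀ i ∈ S, opow (a i) (q - 1) - opow (u n i) (q - 1) = -(Δt * discLap w a i) :=
    fun i hi => by
      have := hFD.2.2 n i ((hS i).mp hi)
      field_simp at this
      linarith
  have hdissip : (1 - 1 / q) * (lqNorm h q a ^ q - lqNorm h q (u n) ^ q) ≤ -(Δt * E ^ 2) :=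
    calc (1 - 1 / q) * (lqNorm h q a ^ q - lqNorm h q (u n) ^ q)
        = ∑ i ∈ S, h * ((1 - 1 / q) * (|a i| ^ q - |u n i| ^ q)) := by
          rw [lqNorm_rpow hh.le (by positivity) (hsupp _),
            lqNorm_rpow hh.le (by positivity) (hsupp _), ← sum_sub_distrib, mul_sum]
          exact sum_congr rfl fun i _ => by ring
      _ ≤ ∑ i ∈ S, h * ((opow (a i) (q - 1) - opow (u n i) (q - 1)) * a i) :=
          sum_le_sum fun i _ => mul_le_mul_of_nonneg_left (mul_sub_le_opow_sub_mul hq _ _) hh.le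
      _ = -(Δt * E ^ 2) := by
          rw [energyNorm_sq hh.le hw hws (hsupp _), mul_sum, ← sum_neg_distrib]
          exact sum_congr rfl fun i hi => by rw [hscheme i hi]; ring
  have hsobolev : q / ((q - 1) * C ^ 2) * lqNorm h q a ^ 2 ≤ q / (q - 1) * E ^ 2 :=
    calc q / ((q - 1) * C ^ 2) * lqNorm h q a ^ 2
        ≤ q / ((q - 1) * C ^ 2) * (C * E) ^ 2 := by
          have : 0 < q - 1 := by linarith
          gcongr
          exacts [lqNorm_nonneg hh.le, hPS a (hFD.2.1 _)]
      _ = q / (q - 1) * E ^ 2 := by field_simp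
  have hcancel : q / (q - 1) * (1 - 1 / q) = 1 := by
    have : q - 1 ≠ 0 := by linarith
    field_simp
  have hdissip' := mul_le_mul_of_nonneg_left hdissip
    (div_pos (by linarith : 0 < q) (by linarith : 0 < q - 1)).le
  rw [← mul_assoc, hcancel, one_mul] at hdissip'
  nlinarith [mul_le_mul_of_nonneg_left hsobolev hΔt.le]

section Bernoulli

variable {c θ : ℝ}

theorem one_add_rpow_le_div_of_nonpos (hc : c ≤ 0) (hθ : 0 ≤ θ) :
    (1 + θ) ^ c ≤ (1 + θ) / (1 + (1 - c) * θ) := by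
  have hθ' : 0 < 1 + θ := by linarith
  have hbern :=
    one_add_mul_self_le_rpow_one_add (by linarith : -1 ≤ θ) (by linarith : 1 ≤ 1 - c)
  calc (1 + θ) ^ c = (1 + θ) / (1 + θ) ^ (1 - c) := by
        rw [Real.rpow_sub hθ', Real.rpow_one, div_div_cancel₀ hθ'.ne']
    _ ≤ (1 + θ) / (1 + (1 - c) * θ) :=
        div_le_div_of_nonneg_left hθ'.le (by nlinarith) hbern

theorem div_le_one_add_rpow (hc0 : 0 ≤ c) (hc1 : c ≤ 1) (hθ : 0 ≤ θ) :
    (1 + θ) / (1 + (1 - c) * θ) ≤ (1 + θ) ^ c := by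
  have hθ' : 0 < 1 + θ := by linarith
  have hbern := rpow_one_add_le_one_add_mul_self (by linarith : -1 ≤ θ)
    (by linarith : 0 ≤ 1 - c) (by linarith : 1 - c ≤ 1)
  calc (1 + θ) / (1 + (1 - c) * θ) ≤ (1 + θ) / (1 + θ) ^ (1 - c) :=
        div_le_div_of_nonneg_left hθ'.le (by positivity) hbern
    _ = (1 + θ) ^ c := by
        rw [Real.rpow_sub hθ', Real.rpow_one, div_div_cancel₀ hθ'.ne']

end Bernoulli

section OneStep

variable {q a b s : ℝ}

theorem rpow_rpow_sub_two_div (hq : q ≠ 0) (hb : 0 ≤ b) :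
    (b ^ q) ^ ((q - 2) / q) = b ^ (q - 2) := by
  rw [← Real.rpow_mul hb, mul_div_cancel₀ _ hq]

theorem add_mul_sq_rpow_sub_two_div (hq : q ≠ 0) (ha : 0 < a) (hs : 0 ≤ s) :
    (a ^ q + s * a ^ 2) ^ ((q - 2) / q) = a ^ (q - 2) * (1 + s * a ^ (2 - q)) ^ ((q - 2) / q) := by
  have hfac : a ^ q + s * a ^ 2 = a ^ q * (1 + s * a ^ (2 - q)) := by
    rw [mul_add, mul_one, mul_left_comm, ← Real.rpow_add ha, add_sub_cancel, Real.rpow_two]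
  rw [hfac, Real.mul_rpow (by positivity) (by positivity), rpow_rpow_sub_two_div hq ha.le]

theorem rpow_sub_two_le_of_le_two (hq0 : 0 < q) (hq2 : q ≤ 2) (ha : 0 < a) (hb : 0 ≤ b)
    (hs : 0 ≤ s) (hab : a ^ q + s * a ^ 2 ≤ b ^ q) :
    b ^ (q - 2) ≤ a ^ (q - 2) + (q - 2) / q * s * (1 - 2 / q * (s * a ^ (2 - q))) := by
  set c := (q - 2) / q
  set y := a ^ (q - 2)
  set θ := s * a ^ (2 - q)
  have hc : c ≤ 0 := div_nonpos_of_nonpos_of_nonneg (by linarith) hq0.le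
  have hd : 2 / q = 1 - c := by simp only [c]; field_simp; ring
  have hyθ : y * θ = s := by
    rw [mul_left_comm, ← Real.rpow_add ha, sub_add_sub_cancel', sub_self, Real.rpow_zero, mul_one]
  have hy : 0 < y := by positivity
  have hθ : 0 ≤ θ := by positivity
  have hden : 0 < 1 + (1 - c) * θ := by nlinarith
  calc b ^ (q - 2) = (b ^ q) ^ c := (rpow_rpow_sub_two_div hq0.ne' hb).symm
    _ ≤ (a ^ q + s * a ^ 2) ^ c := Real.rpow_le_rpow_of_nonpos (by positivity) hab hc
    _ = y * (1 + θ) ^ c := add_mul_sq_rpow_sub_two_div hq0.ne' ha hs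
    _ ≤ y * ((1 + θ) / (1 + (1 - c) * θ)) :=
        mul_le_mul_of_nonneg_left (one_add_rpow_le_div_of_nonpos hc hθ) hy.le
    _ ≤ y + c * s * (1 - 2 / q * θ) := by
        rw [hd, mul_div_assoc', div_le_iff₀ hden, ← hyθ]
        nlinarith [mul_nonneg (mul_nonneg (neg_nonneg.mpr hc) (mul_nonneg hy.le hθ))
          (sq_nonneg ((1 - c) * θ))]

theorem le_rpow_sub_two_of_two_le (hq2 : 2 ≤ q) (ha : 0 < a) (hb : 0 ≤ b)
    (hs : 0 ≤ s) (hab : a ^ q + s * a ^ 2 ≤ b ^ q) :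
    a ^ (q - 2) + (q - 2) / q * s * (1 - 2 / q * (s * a ^ (2 - q))) ≤ b ^ (q - 2) := by
  have hq0 : 0 < q := by linarith
  set c := (q - 2) / q
  set y := a ^ (q - 2)
  set θ := s * a ^ (2 - q)
  have hc0 : 0 ≤ c := div_nonneg (by linarith) hq0.le
  have hc1 : c ≤ 1 := div_le_one_of_le₀ (by linarith) hq0.le
  have hd : 2 / q = 1 - c := by simp only [c]; field_simp; ring
  have hyθ : y * θ = s := by
    rw [mul_left_comm, ← Real.rpow_add ha, sub_add_sub_cancel', sub_self, Real.rpow_zero, mul_one]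
  have hy : 0 < y := by positivity
  have hθ : 0 ≤ θ := by positivity
  have hden : 0 < 1 + (1 - c) * θ := by nlinarith
  calc y + c * s * (1 - 2 / q * θ) ≤ y * ((1 + θ) / (1 + (1 - c) * θ)) := by
        rw [hd, mul_div_assoc', le_div_iff₀ hden, ← hyθ]
        nlinarith [mul_nonneg (mul_nonneg hc0 (mul_nonneg hy.le hθ))
          (sq_nonneg ((1 - c) * θ))]
    _ ≤ y * (1 + θ) ^ c := mul_le_mul_of_nonneg_left (div_le_one_add_rpow hc0 hc1 hθ) hy.le
    _ = (a ^ q + s * a ^ 2) ^ c := (add_mul_sq_rpow_sub_two_div hq0.ne' ha hs).symm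
    _ ≤ (b ^ q) ^ c := Real.rpow_le_rpow (by positivity) hab hc0
    _ = b ^ (q - 2) := rpow_rpow_sub_two_div hq0.ne' hb

end OneStep

section Iteration

variable {q s M ε : ℝ} {x : ℕ → ℝ}

theorem add_mul_le_of_forall_add_le_succ {z : ℕ → ℝ} {δ : ℝ} {n : ℕ}
    (h : ∀ k < n, z k + δ ≤ z (k + 1)) : z 0 + n * δ ≤ z n := by
  induction n with
  | zero => simp
  | succ n ih =>
    have := h n n.lt_succ_self
    push_cast
    linarith [ih fun k hk => h k (hk.trans n.lt_succ_self)]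

theorem antitone_of_rpow_add_mul_sq_le (hq0 : 0 < q) (hs : 0 ≤ s) (hx : ∀ k, 0 ≤ x k)
    (hrec : ∀ k, x (k + 1) ^ q + s * x (k + 1) ^ 2 ≤ x k ^ q) : Antitone x :=
  antitone_nat_of_succ_le fun k => (Real.rpow_le_rpow_iff (hx _) (hx _) hq0).mp <| by
    nlinarith [hrec k, sq_nonneg (x (k + 1))]

theorem add_mul_le_rpow_sub_two_of_le_two (hq0 : 0 < q) (hq2 : q ≤ 2) (hs : 0 ≤ s)
    (hx : ∀ k, 0 ≤ x k) (hrec : ∀ k, x (k + 1) ^ q + s * x (k + 1) ^ 2 ≤ x k ^ q)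
    (hxM : x 0 ≤ M) {n : ℕ} (hn : 0 < x n) :
    x 0 ^ (q - 2) + n * ((2 - q) / q * s * (1 - 2 / q * (s * M ^ (2 - q)))) ≤ x n ^ (q - 2) := by
  have hanti := antitone_of_rpow_add_mul_sq_le hq0 hs hx hrec
  refine add_mul_le_of_forall_add_le_succ (z := fun k => x k ^ (q - 2)) fun k hk => ?_
  have hpos : 0 < x (k + 1) := hn.trans_le (hanti hk)
  have hpow : x (k + 1) ^ (2 - q) ≤ M ^ (2 - q) :=
    Real.rpow_le_rpow hpos.le ((hanti (Nat.zero_le _)).trans hxM) (by linarith)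
  have hcoef : 0 ≤ (2 - q) / q * s := mul_nonneg (div_nonneg (by linarith) hq0.le) hs
  have := rpow_sub_two_le_of_le_two hq0 hq2 hpos (hx k) hs (hrec k)
  linear_combination this
    + mul_nonneg hcoef (mul_nonneg (by positivity : 0 ≤ 2 / q * s) (sub_nonneg.mpr hpow))

theorem rpow_sub_two_add_mul_le_of_two_le (hq2 : 2 ≤ q) (hs : 0 ≤ s)
    (hx : ∀ k, 0 ≤ x k) (hrec : ∀ k, x (k + 1) ^ q + s * x (k + 1) ^ 2 ≤ x k ^ q)
    {n : ℕ} (hε : 0 < ε) (hn : ε ≤ x n) :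
    x n ^ (q - 2) + n * ((q - 2) / q * s * (1 - 2 / q * (s * ε ^ (2 - q)))) ≤ x 0 ^ (q - 2) := by
  have hq0 : 0 < q := by linarith
  have hanti := antitone_of_rpow_add_mul_sq_le hq0 hs hx hrec
  have key := add_mul_le_of_forall_add_le_succ (z := fun k => -x k ^ (q - 2))
    (δ := (q - 2) / q * s * (1 - 2 / q * (s * ε ^ (2 - q)))) (n := n) fun k hk => by
      have hle : ε ≤ x (k + 1) := hn.trans (hanti hk)
      have hpow : x (k + 1) ^ (2 - q) ≤ ε ^ (2 - q) :=
        Real.rpow_le_rpow_of_nonpos hε hle (by linarith)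
      have hcoef : 0 ≤ (q - 2) / q * s := mul_nonneg (div_nonneg (by linarith) hq0.le) hs
      have := le_rpow_sub_two_of_two_le hq2 (hε.trans_le hle) (hx k) hs (hrec k)
      linear_combination this
        + mul_nonneg hcoef (mul_nonneg (by positivity : 0 ≤ 2 / q * s) (sub_nonneg.mpr hpow))
  linarith

end Iteration

section Decay

variable {q s M ε : ℝ} {x : ℕ → ℝ}

theorem le_decay_add_of_lt_two (hq0 : 0 < q) (hq2 : q < 2) (hs : 0 ≤ s)
    (hr : 0 < 1 - 2 / q * (s * M ^ (2 - q))) (hx : ∀ k, 0 ≤ x k) (hx0 : x 0 ≤ M)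
    (hrec : ∀ k, x (k + 1) ^ q + s * x (k + 1) ^ 2 ≤ x k ^ q) (n : ℕ) :
    x n ≤ (max (x 0 ^ (q - 2) + (2 - q) / q * s * n) 0) ^ (1 / (q - 2))
      + ((1 - 2 / q * (s * M ^ (2 - q))) ^ (1 / (q - 2)) - 1) * M := by
  have hM : 0 ≤ M := (hx 0).trans hx0
  set e := 1 / (q - 2)
  set r := 1 - 2 / q * (s * M ^ (2 - q))
  have he : e ≤ 0 := one_div_nonpos.mpr (by linarith)
  have hr1 : r ≤ 1 := sub_le_self _ (by positivity)
  have hre : 1 ≤ r ^ e := Real.one_le_rpow_of_pos_of_le_one_of_nonpos hr hr1 he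
  rcases (hx n).eq_or_lt with hzero | hpos
  · rw [← hzero]
    exact add_nonneg (by positivity) (mul_nonneg (sub_nonneg.mpr hre) hM)
  have hx0pos : 0 < x 0 := hpos.trans_le (antitone_of_rpow_add_mul_sq_le hq0 hs hx hrec n.zero_le)
  set z0 := x 0 ^ (q - 2)
  set κT := (2 - q) / q * s * n
  have hz0 : 0 < z0 := by positivity
  have hκT : 0 ≤ κT :=
    mul_nonneg (mul_nonneg (div_nonneg (by linarith) hq0.le) hs) n.cast_nonneg
  have hz : z0 + r * κT ≤ x n ^ (q - 2) := by
    convert add_mul_le_rpow_sub_two_of_le_two hq0 hq2.le hs hx hrec hx0 hpos using 2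
    simp only [r, κT]
    ring
  have hX : (z0 + κT) ^ e ≤ M := calc
    (z0 + κT) ^ e ≤ z0 ^ e := Real.rpow_le_rpow_of_nonpos hz0 (by linarith) he
    _ = x 0 := by
      simp only [z0, e, one_div, Real.rpow_rpow_inv hx0pos.le (by linarith : q - 2 ≠ 0)]
    _ ≤ M := hx0
  rw [max_eq_left (by positivity)]
  calc x n = (x n ^ (q - 2)) ^ e := by
        simp only [e, one_div, Real.rpow_rpow_inv (hx n) (by linarith : q - 2 ≠ 0)]
    _ ≤ (z0 + r * κT) ^ e := Real.rpow_le_rpow_of_nonpos (by positivity) hz he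
    _ ≤ (r * (z0 + κT)) ^ e := Real.rpow_le_rpow_of_nonpos (by positivity) (by nlinarith) he
    _ = r ^ e * (z0 + κT) ^ e := Real.mul_rpow hr.le (by positivity)
    _ ≤ (z0 + κT) ^ e + (r ^ e - 1) * M := by nlinarith

theorem rpow_sub_two_le_decay_add_of_two_lt (hq2 : 2 < q) (hs : 0 ≤ s)
    (hd : 2 / q * (s * ε ^ (2 - q)) ≤ 1) (hx : ∀ k, 0 ≤ x k) (hx0 : x 0 ≤ M)
    (hrec : ∀ k, x (k + 1) ^ q + s * x (k + 1) ^ 2 ≤ x k ^ q) {n : ℕ} (hε : 0 < ε)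
    (hn : ε ≤ x n) :
    x n ^ (q - 2) ≤ max (x 0 ^ (q - 2) + (2 - q) / q * s * n) 0
      + 2 / q * (s * ε ^ (2 - q)) * M ^ (q - 2) := by
  have hq0 : 0 < q := by linarith
  set d := 2 / q * (s * ε ^ (2 - q))
  set z0 := x 0 ^ (q - 2)
  set κT := (q - 2) / q * s * n
  have hd0 : 0 ≤ d := by positivity
  have hz : x n ^ (q - 2) + (1 - d) * κT ≤ z0 := by
    convert rpow_sub_two_add_mul_le_of_two_le hq2.le hs hx hrec hε hn using 2
    simp only [d, κT]
    ring
  have hz0M : z0 ≤ M ^ (q - 2) := Real.rpow_le_rpow (hx 0) hx0 (by linarith)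
  rw [show x 0 ^ (q - 2) + (2 - q) / q * s * n = z0 - κT by simp only [z0, κT]; ring]
  nlinarith [mul_le_mul_of_nonneg_left (le_max_left (z0 - κT) 0) (sub_nonneg.mpr hd),
    mul_le_mul_of_nonneg_left hz0M hd0, mul_nonneg hd0 (le_max_right (z0 - κT) 0)]

end Decay

section SmallTimeStep

variable {q lam M ε : ℝ}

theorem eventually_le_decay_add_of_lt_two (hq0 : 0 < q) (hq2 : q < 2) (hlam : 0 ≤ lam)
    (hε : 0 < ε) :
    ∀ᶠ Δt in 𝓝[>] 0, ∀ x : ℕ → ℝ, (∀ k, 0 ≤ x k) → x 0 ≤ M →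
      (∀ k, x (k + 1) ^ q + lam * Δt * x (k + 1) ^ 2 ≤ x k ^ q) → ∀ n : ℕ,
        x n ≤ (max (x 0 ^ (q - 2) + (2 - q) / q * lam * n * Δt) 0) ^ (1 / (q - 2)) + ε := by
  set e := 1 / (q - 2)
  set d := 2 / q * lam * M ^ (2 - q)
  have hlin : Tendsto (fun t : ℝ => 1 - d * t) (𝓝 0) (𝓝 1) := by
    simpa using
      (tendsto_const_nhds (x := (1 : ℝ))).sub ((tendsto_id (x := 𝓝 (0 : ℝ))).const_mul d)
  have herr : Tendsto (fun t : ℝ => ((1 - d * t) ^ e - 1) * M) (𝓝 0) (𝓝 0) := by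
    simpa using ((hlin.rpow_const (Or.inl one_ne_zero)).sub_const 1).mul_const M
  filter_upwards [nhdsWithin_le_nhds ((herr.eventually_lt_const hε).and
    (hlin.eventually_const_lt one_pos)), self_mem_nhdsWithin] with Δt ⟨hsmall, hr⟩ hΔt
  intro x hx hx0 hrec n
  have hd : 2 / q * (lam * Δt * M ^ (2 - q)) = d * Δt := by ring
  have := le_decay_add_of_lt_two hq0 hq2 (mul_nonneg hlam (le_of_lt hΔt)) (hd ▸ hr) hx hx0 hrec n
  rw [hd, show (2 - q) / q * (lam * Δt) * n = (2 - q) / q * lam * n * Δt by ring] at this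
  linarith

theorem eventually_le_decay_add_of_two_lt (hq2 : 2 < q) (hlam : 0 ≤ lam) (hε : 0 < ε) :
    ∀ᶠ Δt in 𝓝[>] 0, ∀ x : ℕ → ℝ, (∀ k, 0 ≤ x k) → x 0 ≤ M →
      (∀ k, x (k + 1) ^ q + lam * Δt * x (k + 1) ^ 2 ≤ x k ^ q) → ∀ n : ℕ,
        x n ≤ (max (x 0 ^ (q - 2) + (2 - q) / q * lam * n * Δt) 0) ^ (1 / (q - 2)) + ε := by
  set e := 1 / (q - 2)
  set B := M ^ (q - 2)
  set d := 2 / q * lam * ε ^ (2 - q)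
  have he : 0 ≤ e := one_div_nonneg.mpr (by linarith)
  obtain ⟨δ, hδ, hunif⟩ := Metric.uniformContinuousOn_iff.mp
    ((isCompact_Icc (a := 0) (b := 2 * B)).uniformContinuousOn_of_continuous
      (Real.continuous_rpow_const he).continuousOn) ε hε
  have hlin : Tendsto (fun t : ℝ => d * t) (𝓝 0) (𝓝 0) := by
    simpa using (tendsto_id (x := 𝓝 (0 : ℝ))).const_mul d
  filter_upwards [nhdsWithin_le_nhds
    ((hlin.mul_const B |>.eventually_lt_const (by simpa using hδ)).and
      (hlin.eventually_lt_const one_pos)), self_mem_nhdsWithin] with Δt ⟨hdB, hd1⟩ hΔt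
  intro x hx hx0 hrec n
  set b := max (x 0 ^ (q - 2) + (2 - q) / q * lam * n * Δt) 0
  rcases le_or_gt (x n) ε with hle | hgt
  · have : 0 ≤ b ^ e := by positivity
    linarith
  have hΔt : (0 : ℝ) < Δt := hΔt
  have hdΔt : 2 / q * (lam * Δt * ε ^ (2 - q)) = d * Δt := by ring
  have hz := rpow_sub_two_le_decay_add_of_two_lt hq2 (mul_nonneg hlam hΔt.le) (hdΔt ▸ hd1.le)
    hx hx0 hrec hε hgt.le
  rw [hdΔt, show (2 - q) / q * (lam * Δt) * n = (2 - q) / q * lam * n * Δt by ring] at hz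
  have hB : 0 ≤ B := Real.rpow_nonneg ((hx 0).trans hx0) _
  have hbB : b ≤ B := max_le (by
    have : (2 - q) / q * lam * n * Δt ≤ 0 :=
      mul_nonpos_of_nonpos_of_nonneg (mul_nonpos_of_nonpos_of_nonneg
        (mul_nonpos_of_nonpos_of_nonneg (div_nonpos_of_nonpos_of_nonneg (by linarith) (by linarith))
          hlam) n.cast_nonneg) hΔt.le
    linarith [Real.rpow_le_rpow (hx 0) hx0 (by linarith : 0 ≤ q - 2)]) hB
  have hdB : 0 ≤ d * Δt * B := by positivity
  have hclose := hunif (b + d * Δt * B) ⟨by positivity, by nlinarith⟩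
    b ⟨by positivity, by linarith⟩ (by rwa [Real.dist_eq, add_sub_cancel_left, abs_of_nonneg hdB])
  calc x n = (x n ^ (q - 2)) ^ e := by
        simp only [e, one_div, Real.rpow_rpow_inv (hx n) (by linarith : q - 2 ≠ 0)]
    _ ≤ (b + d * Δt * B) ^ e := Real.rpow_le_rpow (Real.rpow_nonneg (hx n) _) hz he
    _ ≤ b ^ e + ε := by linarith [(abs_sub_lt_iff.mp (Real.dist_eq _ _ ▸ hclose)).1]

end SmallTimeStep

theorem stmt13_general (q C M : ℝ) (hq1 : 1 < q) (hq2 : q ≠ 2) (hC : 0 < C) :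
    ∀ ε : ℝ, 0 < ε → ∃ Δt₀ : ℝ, 0 < Δt₀ ∧
      ∀ h : ℝ, 0 < h → ∀ Mx : ℤ, 1 ≤ Mx →
        ∀ w : ℤ → ℝ, (∀ j : ℤ, 0 ≤ w j) → (∀ j : ℤ, w (-j) = w j) → Summable w →
          PSConst h q C w Mx →
          ∀ u0 : ℤ → ℝ, (∀ i : ℤ, Mx < |i| → u0 i = 0) → (∃ i : ℤ, u0 i ≠ 0) →
            lqNorm h q u0 ≤ M →
            ∀ Δt : ℝ, 0 < Δt → Δt < Δt₀ →
              ∀ u : ℕ → ℤ → ℝ, IsFD q Δt w Mx u0 u →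
                ∀ n : ℕ,
                  lqNorm h q (u n) ≤
                    (max (lqNorm h q u0 ^ (q - 2) +
                        ((2 - q) / (q - 1)) * C ^ (-2 : ℤ) * (n : ℝ) * Δt) 0) ^ (1 / (q - 2)) + ε := by
  intro ε hε
  set lam := q / ((q - 1) * C ^ 2)
  have hlam : 0 ≤ lam := div_nonneg (by linarith) (mul_nonneg (by linarith) (sq_nonneg C))
  have hsmall := hq2.lt_or_gt.elim
    (fun h => eventually_le_decay_add_of_lt_two (M := M) (by linarith) h hlam hε)
    (fun h => eventually_le_decay_add_of_two_lt (M := M) h hlam hε)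
  obtain ⟨Δt₀, hΔt₀, hsub⟩ := mem_nhdsGT_iff_exists_Ioo_subset.mp hsmall
  refine ⟨Δt₀, hΔt₀, fun h hh Mx _ w hw _ hws hPS u0 _ _ hu0 Δt hΔt hΔtlt u hFD n => ?_⟩
  have hcoef : (2 - q) / q * lam = (2 - q) / (q - 1) * C ^ (-2 : ℤ) := by
    simp only [lam, zpow_neg]
    field_simp
  have := hsub ⟨hΔt, hΔtlt⟩ (fun k => lqNorm h q (u k)) (fun k => lqNorm_nonneg hh.le)
    (hFD.1 ▸ hu0) (lqNorm_succ_rpow_add_le hq1 hC.ne' hh hΔt hw hws hPS hFD) n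
  rwa [hFD.1, hcoef] at this

theorem stmt13 (q C M : ℝ) (hq1 : 1 < q) (hq2 : q ≠ 2) (hC : 0 < C) (hM : 0 < M) :
    ∀ ε : ℝ, 0 < ε → ∃ Δt₀ : ℝ, 0 < Δt₀ ∧
      ∀ h : ℝ, 0 < h → ∀ Mx : ℤ, 1 ≤ Mx →
        ∀ w : ℤ → ℝ, (∀ j : ℤ, 0 ≤ w j) → (∀ j : ℤ, w (-j) = w j) → Summable w →
          PSConst h q C w Mx →
          ∀ u0 : ℤ → ℝ, (∀ i : ℤ, Mx < |i| → u0 i = 0) → (∃ i : ℤ, u0 i ≠ 0) →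
            lqNorm h q u0 ≤ M →
            ∀ Δt : ℝ, 0 < Δt → Δt < Δt₀ →
              ∀ u : ℕ → ℤ → ℝ, IsFD q Δt w Mx u0 u →
                ∀ n : ℕ,
                  lqNorm h q (u n) ≤
                    (max (lqNorm h q u0 ^ (q - 2) +
                        ((2 - q) / (q - 1)) * C ^ (-2 : ℤ) * (n : ℝ) * Δt) 0) ^ (1 / (q - 2)) + ε :=
  stmt13_general q C M hq1 hq2 hC
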